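/- arXiv:1312.0534 — 4 statements merged into one kernel-verified Lean document; each statement's English description precedes it below -/
import Mathlib

section
/- Let X be a real Hilbert space, let Z be a nonempty closed convex subset of X, let β > 0, set C := Z_{[β]}, and let Q be the intrepid projector onto C with respect to Z and β. Let α ∈ [0, β], let y ∈ Z_{[α]}, and let x ∈ X with β < d_Z(x) < 2β. Then ‖x − y‖² − ‖Qx − y‖² ≥ 2(β−α)‖x − Qx‖, where ‖x − Qx‖ = (1/β)·d_Z(x)·(d_Z(x) − β) = (1/β)·d_C(x)·(β + d_C(x)). -/
open Metric
open scoped InnerProductSpace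

/-! Write `p = P_Z x`, `d = d_Z(x)` and `t = d/β - 1 ∈ (0, 1)`, so that `x - Qx = t (x - p)`.
Expanding the square, `‖x - y‖² - ‖Qx - y‖² = 2t⟪x - y, x - p⟫ - t²d²`, and the variational
inequality at `p` together with Cauchy–Schwarz against `P_Z y` gives `⟪x - y, x - p⟫ ≥ d (d - α)`.
The claim then reduces to `(d - β)(2β - d) ≥ 0`. -/

section NormedSpace

variable {E : Type*} [NormedAddCommGroup E] [NormedSpace ℝ E]

/-- Walking from `x` towards a nearest point of `Z` until distance `β` from `Z` is a shortest
path to the enlargement `Z_[β]`; the reverse inequality is the `1`-Lipschitz property of `d_Z`. -/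
theorem infDist_setOf_infDist_le {Z : Set E} {β : ℝ} {x p : E} (hβ : 0 < β) (hp : p ∈ Z)
    (hxp : dist x p = infDist x Z) (hx : β ≤ infDist x Z) :
    infDist x {w | infDist w Z ≤ β} = infDist x Z - β := by
  set d := infDist x Z
  have hd : 0 < d := hβ.trans_le hx
  obtain ⟨c, hxc, hcp⟩ := exists_dist_eq x p (div_nonneg hβ.le hd.le)
    (sub_nonneg.2 ((div_le_one hd).2 hx)) (add_sub_cancel _ 1)
  have hc : infDist c Z ≤ β :=
    (infDist_le_dist_of_mem hp).trans_eq (by rw [hcp, hxp, div_mul_cancel₀ _ hd.ne'])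
  apply le_antisymm
  · refine (infDist_le_dist_of_mem (s := {w | infDist w Z ≤ β}) hc).trans_eq ?_
    rw [hxc, hxp]
    field_simp
  · refine (le_infDist ⟨c, hc⟩).2 fun w (hw : infDist w Z ≤ β) => ?_
    linarith [infDist_le_infDist_add_dist (x := x) (y := w) (s := Z)]

end NormedSpace

section InnerProductSpace

variable {E : Type*} [NormedAddCommGroup E] [InnerProductSpace ℝ E]

theorem real_inner_le_zero_of_dist_eq_infDist {Z : Set E} (hZ : Convex ℝ Z) {x p z : E}
    (hp : p ∈ Z) (hxp : dist x p = infDist x Z) (hz : z ∈ Z) : ⟪x - p, z - p⟫_ℝ ≤ 0 := by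
  refine (norm_eq_iInf_iff_real_inner_le_zero hZ hp).1 ?_ z hz
  simpa only [dist_eq_norm, infDist_eq_iInf] using hxp

/-- Splitting `x - y = (x - p) + (p - z) + (z - y)`: the middle term pairs nonnegatively with
`x - p` by the variational inequality, the last one is controlled by Cauchy–Schwarz. -/
theorem mul_sub_le_real_inner_of_dist_eq_infDist {Z : Set E} (hZ : Convex ℝ Z) {x p z : E}
    (hp : p ∈ Z) (hxp : dist x p = infDist x Z) (hz : z ∈ Z) (y : E) :
    ‖x - p‖ * (‖x - p‖ - ‖y - z‖) ≤ ⟪x - y, x - p⟫_ℝ := by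
  have hsplit : ⟪x - y, x - p⟫_ℝ = ‖x - p‖ ^ 2 - ⟪x - p, z - p⟫_ℝ - ⟪y - z, x - p⟫_ℝ := by
    rw [← real_inner_self_eq_norm_sq, real_inner_comm (z - p) (x - p), ← inner_sub_left,
      ← inner_sub_left]
    congr 1
    abel
  have hvar := real_inner_le_zero_of_dist_eq_infDist hZ hp hxp hz
  have hcs := real_inner_le_norm (y - z) (x - p)
  rw [hsplit]
  nlinarith

end InnerProductSpace

theorem intrepid_projector_reflection_case_general
    {X : Type*} [NormedAddCommGroup X] [InnerProductSpace ℝ X]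
    (Z : Set X) (hZconv : Convex ℝ Z)
    (β : ℝ) (hβ : 0 < β)
    (PZ : X → X) (hPZ : ∀ x : X, PZ x ∈ Z ∧ dist x (PZ x) = Metric.infDist x Z)
    (C : Set X) (hC : C = {x : X | Metric.infDist x Z ≤ β})
    (Q : X → X)
    (hQ₃ : ∀ x : X, β < Metric.infDist x Z → Metric.infDist x Z < 2 * β →
      Q x = x + (1 - Metric.infDist x Z / β) • (x - PZ x))
    (α : ℝ)
    (y : X) (hy : Metric.infDist y Z ≤ α)
    (x : X) (hx₁ : β < Metric.infDist x Z) (hx₂ : Metric.infDist x Z < 2 * β) :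
    ‖x - y‖ ^ 2 - ‖Q x - y‖ ^ 2 ≥ 2 * (β - α) * ‖x - Q x‖ ∧
    ‖x - Q x‖ = (1 / β) * Metric.infDist x Z * (Metric.infDist x Z - β) ∧
    ‖x - Q x‖ = (1 / β) * Metric.infDist x C * (β + Metric.infDist x C) := by
  obtain ⟨hpZ, hpd⟩ := hPZ x
  obtain ⟨hqZ, hqd⟩ := hPZ y
  set d := infDist x Z
  set t := d / β - 1 with ht_def
  have hd : 0 < d := hβ.trans hx₁
  have ht : 0 < t := sub_pos.2 ((one_lt_div hβ).2 hx₁)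
  have hxp : ‖x - PZ x‖ = d := by rw [← dist_eq_norm, hpd]
  have hxQ : x - Q x = t • (x - PZ x) := by rw [hQ₃ x hx₁ hx₂]; module
  have hnorm : ‖x - Q x‖ = t * d := by rw [hxQ, norm_smul, Real.norm_of_nonneg ht.le, hxp]
  have hinner : d * (d - α) ≤ ⟪x - y, x - PZ x⟫_ℝ := by
    have hle := mul_sub_le_real_inner_of_dist_eq_infDist hZconv hpZ hpd hqZ y
    rw [hxp, ← dist_eq_norm, hqd] at hle
    nlinarith
  refine ⟨?_, by rw [hnorm, ht_def]; field_simp, ?_⟩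
  · have hexpand : ‖x - y‖ ^ 2 - ‖Q x - y‖ ^ 2 = 2 * t * ⟪x - y, x - PZ x⟫_ℝ - (t * d) ^ 2 := by
      rw [show Q x - y = (x - y) - (x - Q x) by abel, norm_sub_sq_real (x - y), hnorm, hxQ,
        inner_smul_right]
      ring
    have hreflect : 0 ≤ t * d * (2 * d - t * d - 2 * β) := by
      have hfactor : 2 * d - t * d - 2 * β = (d - β) * (2 * β - d) / β := by
        rw [ht_def]; field_simp; ring
      rw [hfactor]
      have := sub_pos.2 hx₁; have := sub_pos.2 hx₂
      positivity
    rw [hexpand, hnorm]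
    nlinarith
  · rw [hC, infDist_setOf_infDist_le hβ hpZ hpd hx₁.le, hnorm, ht_def]
    field_simp
    ring

/-- intrepid projector: reflection step.
Let `X` be a real Hilbert space, `Z` nonempty closed convex, `β > 0`,
`C := Z_[β]`, `Q` the intrepid projector onto `C`.  Let `α ∈ [0,β]`,
`y ∈ Z_[α]`, and `x ∈ X` with `β < d_Z(x) < 2β`.  Then
`‖x − y‖² − ‖Qx − y‖² ≥ 2(β−α)‖x − Qx‖`, where
`‖x − Qx‖ = (1/β) d_Z(x)(d_Z(x) − β) = (1/β) d_C(x)(β + d_C(x))`. -/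
theorem intrepid_projector_reflection_case
    {X : Type*} [NormedAddCommGroup X] [InnerProductSpace ℝ X] [CompleteSpace X]
    (Z : Set X) (hZne : Z.Nonempty) (hZcl : IsClosed Z) (hZconv : Convex ℝ Z)
    (β : ℝ) (hβ : 0 < β)
    (PZ : X → X) (hPZ : ∀ x : X, PZ x ∈ Z ∧ dist x (PZ x) = Metric.infDist x Z)
    (C : Set X) (hC : C = {x : X | Metric.infDist x Z ≤ β})
    (Q : X → X)
    (hQ₁ : ∀ x : X, 2 * β ≤ Metric.infDist x Z → Q x = PZ x)
    (hQ₂ : ∀ x : X, Metric.infDist x Z ≤ β → Q x = x)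
    (hQ₃ : ∀ x : X, β < Metric.infDist x Z → Metric.infDist x Z < 2 * β →
      Q x = x + (1 - Metric.infDist x Z / β) • (x - PZ x))
    (α : ℝ) (hα : α ∈ Set.Icc (0 : ℝ) β)
    (y : X) (hy : Metric.infDist y Z ≤ α)
    (x : X) (hx₁ : β < Metric.infDist x Z) (hx₂ : Metric.infDist x Z < 2 * β) :
    ‖x - y‖ ^ 2 - ‖Q x - y‖ ^ 2 ≥ 2 * (β - α) * ‖x - Q x‖ ∧
    ‖x - Q x‖ = (1 / β) * Metric.infDist x Z * (Metric.infDist x Z - β) ∧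
    ‖x - Q x‖ = (1 / β) * Metric.infDist x C * (β + Metric.infDist x C) :=
  intrepid_projector_reflection_case_general Z hZconv β hβ PZ hPZ C hC Q hQ₃ α y hy x hx₁ hx₂
end

section
/- Let X be a real Hilbert space, let Z be a nonempty closed convex subset of X, let β > 0, set C := Z_{[β]}, and let Q be the intrepid projector onto C with respect to Z and β. Then Q is quasi nonexpansive with respect to C: for every x ∈ X and every y ∈ C, ‖Qx − y‖ ≤ ‖x − y‖. -/
/-!
Write `p` for the projection of `x` onto `Z` and `u := x - p`, so `‖u‖ = d_Z(x)`. In all three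
regimes `Qx = p + λ • u` with `λ ∈ [0, 1]`, and `y ∈ C` gives `⟪u, y - p⟫ ≤ β ‖u‖` (the
variational inequality of the projection plus Cauchy–Schwarz for `y - P_Z y`). Expanding squares,
`‖λ • u - w‖ ≤ ‖u - w‖` with `w := y - p` reduces to `2 β ≤ (1 + λ) ‖u‖`, which in the middle
regime `λ = 2 - ‖u‖ / β` is `(‖u‖ - β) (2 β - ‖u‖) ≥ 0`.
-/

open Metric

open scoped RealInnerProductSpace

section

variable {X : Type*} [NormedAddCommGroup X] [InnerProductSpace ℝ X]

theorem real_inner_sub_le_zero_of_dist_eq_infDist {Z : Set X} (hZ : Convex ℝ Z) {x p z : X}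
    (hp : p ∈ Z) (hxp : dist x p = infDist x Z) (hz : z ∈ Z) : ⟪x - p, z - p⟫ ≤ 0 := by
  refine (norm_eq_iInf_iff_real_inner_le_zero hZ hp).1 ?_ z hz
  simpa only [dist_eq_norm, infDist_eq_iInf] using hxp

theorem real_inner_sub_le_mul_norm_of_dist_le {Z : Set X} (hZ : Convex ℝ Z) {x p y q : X}
    {β : ℝ} (hp : p ∈ Z) (hxp : dist x p = infDist x Z) (hq : q ∈ Z) (hyq : dist y q ≤ β) :
    ⟪x - p, y - p⟫ ≤ β * ‖x - p‖ := by
  have hproj : ⟪x - p, q - p⟫ ≤ 0 := real_inner_sub_le_zero_of_dist_eq_infDist hZ hp hxp hq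
  have hcs : ⟪x - p, y - q⟫ ≤ ‖x - p‖ * ‖y - q‖ := real_inner_le_norm _ _
  have hyq' : ‖y - q‖ ≤ β := by rwa [← dist_eq_norm]
  calc ⟪x - p, y - p⟫ = ⟪x - p, q - p⟫ + ⟪x - p, y - q⟫ := by
        rw [← inner_add_right, sub_add_sub_cancel']
    _ ≤ β * ‖x - p‖ := by nlinarith [norm_nonneg (x - p)]

theorem norm_smul_sub_le_norm_sub {u w : X} {β l : ℝ} (hl₀ : 0 ≤ l) (hl₁ : l ≤ 1)
    (hw : ⟪u, w⟫ ≤ β * ‖u‖) (hβ : 2 * β ≤ (1 + l) * ‖u‖) : ‖l • u - w‖ ≤ ‖u - w‖ := by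
  have hinner : 2 * ⟪u, w⟫ ≤ (1 + l) * ‖u‖ ^ 2 := by nlinarith [norm_nonneg u]
  have hsq : ‖l • u - w‖ ^ 2 ≤ ‖u - w‖ ^ 2 := by
    rw [norm_sub_sq_real, norm_sub_sq_real, real_inner_smul_left, norm_smul, Real.norm_of_nonneg hl₀]
    nlinarith [sq_nonneg ‖u‖]
  exact (pow_le_pow_iff_left₀ (norm_nonneg _) (norm_nonneg _) two_ne_zero).1 hsq

theorem norm_smul_sub_le_norm_sub_of_lt_of_lt_two_mul {u w : X} {β : ℝ}
    (hw : ⟪u, w⟫ ≤ β * ‖u‖) (h₁ : β < ‖u‖) (h₂ : ‖u‖ < 2 * β) :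
    ‖(2 - ‖u‖ / β) • u - w‖ ≤ ‖u - w‖ := by
  have hβ : 0 < β := by linarith [norm_nonneg u]
  have hratio₁ : 1 < ‖u‖ / β := by rwa [one_lt_div hβ]
  have hratio₂ : ‖u‖ / β < 2 := by rwa [div_lt_iff₀ hβ]
  have hgap : (1 + (2 - ‖u‖ / β)) * ‖u‖ - 2 * β = (‖u‖ - β) * (2 * β - ‖u‖) / β := by
    field_simp; ring
  have hgap_nonneg : 0 ≤ (‖u‖ - β) * (2 * β - ‖u‖) / β :=
    div_nonneg (mul_nonneg (by linarith) (by linarith)) hβ.le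
  exact norm_smul_sub_le_norm_sub (by linarith) (by linarith) hw (by linarith)

end

theorem intrepid_projector_quasi_nonexpansive_general
    {X : Type*} [NormedAddCommGroup X] [InnerProductSpace ℝ X]
    (Z : Set X) (hZconv : Convex ℝ Z)
    (β : ℝ)
    (PZ : X → X) (hPZ : ∀ x : X, PZ x ∈ Z ∧ dist x (PZ x) = Metric.infDist x Z)
    (C : Set X) (hC : C = {x : X | Metric.infDist x Z ≤ β})
    (Q : X → X)
    (hQ₁ : ∀ x : X, 2 * β ≤ Metric.infDist x Z → Q x = PZ x)
    (hQ₂ : ∀ x : X, Metric.infDist x Z ≤ β → Q x = x)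
    (hQ₃ : ∀ x : X, β < Metric.infDist x Z → Metric.infDist x Z < 2 * β →
      Q x = x + (1 - Metric.infDist x Z / β) • (x - PZ x)) :
    ∀ x : X, ∀ y ∈ C, ‖Q x - y‖ ≤ ‖x - y‖ := by
  intro x y hy
  rw [hC] at hy
  set p := PZ x
  have hnorm : infDist x Z = ‖x - p‖ := by rw [← dist_eq_norm, (hPZ x).2]
  have hw : ⟪x - p, y - p⟫ ≤ β * ‖x - p‖ :=
    real_inner_sub_le_mul_norm_of_dist_le hZconv (hPZ x).1 (hPZ x).2 (hPZ y).1 ((hPZ y).2.trans_le hy)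
  have hxy : x - y = (x - p) - (y - p) := (sub_sub_sub_cancel_right x y p).symm
  rcases le_or_gt (infDist x Z) β with hnear | hβd
  · rw [hQ₂ x hnear]
  rcases lt_or_ge (infDist x Z) (2 * β) with hmid | hfar
  · have hQx : Q x - y = (2 - ‖x - p‖ / β) • (x - p) - (y - p) := by
      rw [hQ₃ x hβd hmid, hnorm]; module
    rw [hnorm] at hβd hmid
    rw [hQx, hxy]
    exact norm_smul_sub_le_norm_sub_of_lt_of_lt_two_mul hw hβd hmid
  · have hQx : Q x - y = (0 : ℝ) • (x - p) - (y - p) := by rw [hQ₁ x hfar]; module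
    rw [hnorm] at hfar
    rw [hQx, hxy]
    exact norm_smul_sub_le_norm_sub le_rfl zero_le_one hw (by linarith)

/-- intrepid projector is quasi nonexpansive.
Let `X` be a real Hilbert space, `Z` nonempty closed convex, `β > 0`,
`C := Z_[β]`, `Q` the intrepid projector onto `C`.  Then for every `x ∈ X`
and every `y ∈ C`, `‖Qx − y‖ ≤ ‖x − y‖`. -/
theorem intrepid_projector_quasi_nonexpansive
    {X : Type*} [NormedAddCommGroup X] [InnerProductSpace ℝ X] [CompleteSpace X]
    (Z : Set X) (hZne : Z.Nonempty) (hZcl : IsClosed Z) (hZconv : Convex ℝ Z)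
    (β : ℝ) (hβ : 0 < β)
    (PZ : X → X) (hPZ : ∀ x : X, PZ x ∈ Z ∧ dist x (PZ x) = Metric.infDist x Z)
    (C : Set X) (hC : C = {x : X | Metric.infDist x Z ≤ β})
    (Q : X → X)
    (hQ₁ : ∀ x : X, 2 * β ≤ Metric.infDist x Z → Q x = PZ x)
    (hQ₂ : ∀ x : X, Metric.infDist x Z ≤ β → Q x = x)
    (hQ₃ : ∀ x : X, β < Metric.infDist x Z → Metric.infDist x Z < 2 * β →
      Q x = x + (1 - Metric.infDist x Z / β) • (x - PZ x)) :
    ∀ x : X, ∀ y ∈ C, ‖Q x - y‖ ≤ ‖x - y‖ :=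
  intrepid_projector_quasi_nonexpansive_general Z hZconv β PZ hPZ C hC Q hQ₁ hQ₂ hQ₃
end

section
/- Consider the CycIP setup in a real Hilbert space X, and suppose that ⋂_{i∈I₁} C_i ∩ ⋂_{i∈I₀} int C_i ≠ ∅, that the control is quasicyclic with some quasiperiod M ≥ 1, and that I₁ is either empty or a singleton. Then the sequence generated by x_{k+1} := T_{i(k)} x_k from any x₀ ∈ X converges strongly (in norm) to some point of C := ⋂_{i∈I} C_i. -/
/-!
Each operator moves towards its set without moving away from any point of it. Since `z` is
interior to every enlargement, an intrepid step is nonexpansive towards a whole ball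
`closedBall z r`, and testing this at the point of the ball opposite to the step shows that
`‖x_k - z‖²` drops by at least `2 r` times the step length. A relaxed projection onto the single
remaining set `C j` instead shrinks the distance to `C j` by the factor `|1 - λ|`, while every
other step raises it by at most its own length. A combination of the two potentials therefore
pays for all step lengths: the orbit has finite length, hence converges, and since every index
is used infinitely often, the limit lies in every `C i`.
-/

open scoped RealInnerProductSpace
open Metric Filter Topology AffineMap

theorem summable_of_le_sub_succ {d Φ : ℕ → ℝ} (hd : ∀ k, 0 ≤ d k) (hΦ : ∀ k, 0 ≤ Φ k)
    (h : ∀ k, d k ≤ Φ k - Φ (k + 1)) : Summable d := by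
  refine summable_of_sum_range_le hd (c := Φ 0) fun n => ?_
  calc ∑ k ∈ Finset.range n, d k ≤ ∑ k ∈ Finset.range n, (Φ k - Φ (k + 1)) :=
        Finset.sum_le_sum fun k _ => h k
    _ = Φ 0 - Φ n := Finset.sum_range_sub' Φ n
    _ ≤ Φ 0 := sub_le_self _ (hΦ n)

/-- `(1 + b) * u + a * e` decreases by at least `a * b` times each step length. -/
theorem summable_of_le_sub_succ_or_le_sub_succ {d u e : ℕ → ℝ} {a b : ℝ} (ha : 0 < a)
    (hb : 0 < b) (hd : ∀ k, 0 ≤ d k) (hu : ∀ k, 0 ≤ u k) (he : ∀ k, 0 ≤ e k)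
    (hu_succ : ∀ k, u (k + 1) ≤ u k) (he_succ : ∀ k, e (k + 1) ≤ e k + d k)
    (hdesc : ∀ k, a * d k ≤ u k - u (k + 1) ∨ b * d k ≤ e k - e (k + 1)) : Summable d := by
  refine (summable_mul_left_iff (mul_pos ha hb).ne').1 <|
    summable_of_le_sub_succ (Φ := fun k => (1 + b) * u k + a * e k)
      (fun k => mul_nonneg (mul_pos ha hb).le (hd k))
      (fun k => add_nonneg (mul_nonneg (by linarith) (hu k)) (mul_nonneg ha.le (he k))) fun k => ?_
  have hu' := hu_succ k
  have he' := he_succ k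
  rcases hdesc k with h | h
  · nlinarith [mul_le_mul_of_nonneg_left he' ha.le]
  · nlinarith [mul_le_mul_of_nonneg_left h ha.le]

section InnerProductSpace

variable {X : Type*} [NormedAddCommGroup X] [InnerProductSpace ℝ X]

theorem real_inner_sub_sub_nonpos_of_dist_eq_infDist {s : Set X} (hs : Convex ℝ s) {x p q : X}
    (hp : p ∈ s) (hxp : dist x p = infDist x s) (hq : q ∈ s) : ⟪x - p, q - p⟫ ≤ 0 := by
  refine (norm_eq_iInf_iff_real_inner_le_zero hs hp).1 ?_ q hq
  simp only [← dist_eq_norm, hxp, infDist_eq_iInf]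

theorem real_inner_sub_sub_le_dist_mul_infDist {s : Set X} (hs : Convex ℝ s) {x p : X}
    (hp : p ∈ s) (hxp : dist x p = infDist x s) (c : X) :
    ⟪x - p, c - p⟫ ≤ dist x p * infDist c s := by
  rcases (dist_nonneg (x := x) (y := p)).eq_or_lt with h0 | hpos
  · simp [dist_eq_zero.1 h0.symm]
  rw [mul_comm, ← div_le_iff₀ hpos, le_infDist ⟨p, hp⟩]
  intro q hq
  rw [div_le_iff₀ hpos, dist_eq_norm, dist_eq_norm]
  calc ⟪x - p, c - p⟫ = ⟪x - p, c - q⟫ + ⟪x - p, q - p⟫ := by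
        rw [← inner_add_right, sub_add_sub_cancel]
    _ ≤ ‖x - p‖ * ‖c - q‖ + 0 :=
        add_le_add (real_inner_le_norm _ _)
          (real_inner_sub_sub_nonpos_of_dist_eq_infDist hs hp hxp hq)
    _ = ‖c - q‖ * ‖x - p‖ := by ring

/-- The condition on `t` reads `t * dist x p ≤ 2 * (dist x p - β)` unless `t = 0`. -/
theorem dist_lineMap_le_of_infDist_le {s : Set X} (hs : Convex ℝ s) {x p c : X} {β t : ℝ}
    (hp : p ∈ s) (hxp : dist x p = infDist x s) (ht : 0 ≤ t)
    (htβ : t * (t * dist x p) ≤ t * (2 * (dist x p - β))) (hc : infDist c s ≤ β) :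
    dist (lineMap x p t) c ≤ dist x c := by
  have hinner := real_inner_sub_sub_le_dist_mul_infDist hs hp hxp c
  have hβ : dist x p * infDist c s ≤ dist x p * β := mul_le_mul_of_nonneg_left hc dist_nonneg
  have hexp : lineMap x p t - c = (x - c) - t • (x - p) := by
    rw [lineMap_apply_module']; module
  have hxc : ⟪x - c, x - p⟫ = dist x p ^ 2 - ⟪x - p, c - p⟫ := by
    rw [dist_eq_norm, ← real_inner_self_eq_norm_sq, real_inner_comm, ← inner_sub_right]
    congr 1; abel
  have hsq : dist (lineMap x p t) c ^ 2 ≤ dist x c ^ 2 := by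
    rw [dist_eq_norm, dist_eq_norm, hexp, norm_sub_sq_real, real_inner_smul_right, norm_smul,
      Real.norm_eq_abs, abs_of_nonneg ht, mul_pow, ← dist_eq_norm x p, hxc]
    nlinarith [mul_nonneg ht (sub_nonneg.2 (hinner.trans hβ)),
      mul_le_mul_of_nonneg_right htβ (dist_nonneg (x := x) (y := p))]
  exact (sq_le_sq₀ dist_nonneg dist_nonneg).1 hsq

theorem dist_lineMap_le_of_mem {s : Set X} (hs : Convex ℝ s) {x p c : X} {t : ℝ} (hp : p ∈ s)
    (hxp : dist x p = infDist x s) (ht₀ : 0 ≤ t) (ht₂ : t ≤ 2) (hc : c ∈ s) :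
    dist (lineMap x p t) c ≤ dist x c := by
  refine dist_lineMap_le_of_infDist_le hs hp hxp ht₀ ?_ (infDist_zero_of_mem hc).le
  have := dist_nonneg (x := x) (y := p)
  nlinarith [mul_nonneg (mul_nonneg ht₀ (sub_nonneg.2 ht₂)) this]

theorem infDist_lineMap_le {s : Set X} {x p : X} (hp : p ∈ s) (t : ℝ) :
    infDist (lineMap x p t) s ≤ |1 - t| * dist x p :=
  (infDist_le_dist_of_mem hp).trans_eq (dist_lineMap_right x p t)

theorem mul_dist_lineMap_le_infDist_sub {s : Set X} {x p : X} (hp : p ∈ s)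
    (hxp : dist x p = infDist x s) {t : ℝ} (ht : 0 < t) :
    (1 - |1 - t|) / t * dist x (lineMap x p t) ≤ infDist x s - infDist (lineMap x p t) s := by
  have h := infDist_lineMap_le hp t (x := x)
  have hcancel : (1 - |1 - t|) / t * (t * dist x p) = (1 - |1 - t|) * dist x p := by
    field_simp
  rw [dist_left_lineMap, Real.norm_eq_abs, abs_of_pos ht, hcancel, ← hxp]
  linarith

section Intrepid

/-- `y` is the image of `x` under the intrepid projector onto the `β`-enlargement of `Z`, when `p`
is the projection of `x` onto `Z`. -/
def IsIntrepidStep (Z : Set X) (β : ℝ) (p x y : X) : Prop :=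
  (2 * β ≤ infDist x Z → y = p) ∧ (infDist x Z ≤ β → y = x) ∧
    (β < infDist x Z → infDist x Z < 2 * β → y = x + (1 - infDist x Z / β) • (x - p))

variable {Z : Set X} {β : ℝ} {p x y : X}

theorem IsIntrepidStep.exists_eq_lineMap (h : IsIntrepidStep Z β p x y) (hβ : 0 < β)
    (hxp : dist x p = infDist x Z) :
    ∃ t, y = lineMap x p t ∧ 0 ≤ t ∧ t * (t * dist x p) ≤ t * (2 * (dist x p - β)) ∧
      |1 - t| * dist x p ≤ β := by
  obtain ⟨hfar, hnear, hmid⟩ := h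
  rw [hxp]
  rcases le_or_gt (infDist x Z) β with hle | hgt
  · exact ⟨0, by rw [lineMap_apply_zero, hnear hle], le_rfl, by simp, by simpa using hle⟩
  rcases le_or_gt (2 * β) (infDist x Z) with hge | hlt
  · exact ⟨1, by rw [lineMap_apply_one, hfar hge], zero_le_one, by linarith, by simpa using hβ.le⟩
  set s := infDist x Z / β
  have hd : infDist x Z = s * β := (div_mul_cancel₀ _ hβ.ne').symm
  rw [hd] at hgt hlt ⊢
  have hs₁ : 1 < s := lt_of_mul_lt_mul_right (by linarith) hβ.le
  have hs₂ : s < 2 := lt_of_mul_lt_mul_right hlt hβ.le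
  refine ⟨s - 1, ?_, by linarith, ?_, ?_⟩
  · rw [hmid (by linarith) (by linarith), lineMap_apply_module']; module
  · exact mul_le_mul_of_nonneg_left (by nlinarith) (by linarith)
  · rw [show 1 - (s - 1) = 2 - s by ring, abs_of_pos (by linarith)]
    nlinarith [sq_nonneg (s - 1)]

theorem IsIntrepidStep.infDist_le (h : IsIntrepidStep Z β p x y) (hβ : 0 < β) (hp : p ∈ Z)
    (hxp : dist x p = infDist x Z) : infDist y Z ≤ β := by
  obtain ⟨t, rfl, -, -, ht⟩ := h.exists_eq_lineMap hβ hxp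
  exact (infDist_lineMap_le hp t).trans ht

theorem IsIntrepidStep.dist_le (h : IsIntrepidStep Z β p x y) (hZ : Convex ℝ Z) (hβ : 0 < β)
    (hp : p ∈ Z) (hxp : dist x p = infDist x Z) {c : X} (hc : infDist c Z ≤ β) :
    dist y c ≤ dist x c := by
  obtain ⟨t, rfl, ht, htβ, -⟩ := h.exists_eq_lineMap hβ hxp
  exact dist_lineMap_le_of_infDist_le hZ hp hxp ht htβ hc

end Intrepid

/-- Testing the inequality at the point `z + r • (x - y) / ‖x - y‖` of the ball. -/
theorem two_mul_mul_dist_le_sq_sub_sq {x y z : X} {r : ℝ} (hr : 0 ≤ r)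
    (h : ∀ c ∈ closedBall z r, dist y c ≤ dist x c) :
    2 * r * dist x y ≤ dist x z ^ 2 - dist y z ^ 2 := by
  set v := (r / ‖x - y‖) • (x - y)
  have hv : ‖v‖ ≤ r := by
    rcases (norm_nonneg (x - y)).eq_or_lt with h0 | hpos
    · simp [v, ← h0, hr]
    · rw [norm_smul, Real.norm_eq_abs, abs_of_nonneg (by positivity), div_mul_cancel₀ _ hpos.ne']
  have hinner : ⟪x - y, v⟫ = r * ‖x - y‖ := by
    rcases (norm_nonneg (x - y)).eq_or_lt with h0 | hpos
    · simp [v, norm_eq_zero.1 h0.symm]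
    · rw [real_inner_smul_right, real_inner_self_eq_norm_sq]
      field_simp
  have hc : z + v ∈ closedBall z r := by rwa [mem_closedBall, dist_self_add_left]
  have hsq := pow_le_pow_left₀ dist_nonneg (h _ hc) 2
  have hy : y - (z + v) = (y - z) - v := by abel
  have hx : x - (z + v) = (x - z) - v := by abel
  rw [dist_eq_norm, dist_eq_norm, hy, hx, norm_sub_sq_real (y - z) v,
    norm_sub_sq_real (x - z) v] at hsq
  have hdiff : ⟪x - z, v⟫ - ⟪y - z, v⟫ = r * ‖x - y‖ := by
    rw [← inner_sub_left, sub_sub_sub_cancel_right, hinner]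
  rw [dist_eq_norm, dist_eq_norm, dist_eq_norm]
  linarith

theorem summable_dist_succ_of_fejer {x : ℕ → X} {z : X} {r : ℝ} (hr : 0 < r)
    (hstep : ∀ k, ∀ c ∈ closedBall z r, dist (x (k + 1)) c ≤ dist (x k) c) :
    Summable fun k => dist (x k) (x (k + 1)) :=
  (summable_mul_left_iff (mul_pos two_pos hr).ne').1 <|
    summable_of_le_sub_succ (Φ := fun k => dist (x k) z ^ 2) (fun _ => by positivity)
      (fun _ => sq_nonneg _) fun k => two_mul_mul_dist_le_sq_sub_sq hr.le (hstep k)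

theorem summable_dist_succ_of_fejer_or_relaxed {x : ℕ → X} {z : X} {r : ℝ}
    (hr : 0 < r) {s : Set X} (hs : Convex ℝ s) (hz : z ∈ s) {P : X → X}
    (hP : ∀ y, P y ∈ s ∧ dist y (P y) = infDist y s) {t : ℝ} (ht : t ∈ Set.Ioo 0 2)
    (hstep : ∀ k, (∀ c ∈ closedBall z r, dist (x (k + 1)) c ≤ dist (x k) c) ∨
      x (k + 1) = lineMap (x k) (P (x k)) t) :
    Summable fun k => dist (x k) (x (k + 1)) := by
  have hb : 0 < (1 - |1 - t|) / t :=
    div_pos (by rw [sub_pos, abs_lt]; constructor <;> linarith [ht.1, ht.2]) ht.1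
  refine summable_of_le_sub_succ_or_le_sub_succ (u := fun k => dist (x k) z ^ 2)
    (e := fun k => infDist (x k) s) (mul_pos two_pos hr) hb (fun _ => dist_nonneg)
    (fun _ => sq_nonneg _) (fun _ => infDist_nonneg) (fun k => ?_) (fun k => ?_) (fun k => ?_)
  · refine pow_le_pow_left₀ dist_nonneg ?_ 2
    rcases hstep k with h | h
    · exact h z (mem_closedBall_self hr.le)
    · rw [h]; exact dist_lineMap_le_of_mem hs (hP _).1 (hP _).2 ht.1.le ht.2.le hz
  · exact infDist_le_infDist_add_dist.trans_eq (by rw [dist_comm])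
  · rcases hstep k with h | h
    · exact Or.inl (two_mul_mul_dist_le_sq_sub_sq hr.le h)
    · rw [h]; exact Or.inr (mul_dist_lineMap_le_infDist_sub (hP _).1 (hP _).2 ht.1)

end InnerProductSpace

theorem mem_closure_of_frequently_dist_le {α : Type*} [PseudoMetricSpace α] {x : ℕ → α}
    {a : α} {δ : ℕ → ℝ} {S : Set α} (hx : Tendsto x atTop (𝓝 a)) (hδ : Tendsto δ atTop (𝓝 0))
    (h : ∃ᶠ k in atTop, ∃ w ∈ S, dist (x k) w ≤ δ k) : a ∈ closure S := by
  refine Metric.mem_closure_iff.2 fun ε hε => ?_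
  have hnear := Metric.tendsto_nhds.1 hx (ε / 2) (by positivity)
  have hsmall := (tendsto_order.1 hδ).2 (ε / 2) (by positivity)
  obtain ⟨k, ⟨w, hw, hkw⟩, hk, hδk⟩ := (h.and_eventually (hnear.and hsmall)).exists
  refine ⟨w, hw, (dist_triangle a (x k) w).trans_lt ?_⟩
  rw [dist_comm] at hk
  linarith

theorem cycIP_main_strong_convergence_general
    {X : Type*} [NormedAddCommGroup X] [InnerProductSpace ℝ X] [CompleteSpace X]
    {ι : Type*} [Fintype ι] (I₀ : Set ι)
    (C : ι → Set X)
    (hC : ∀ i, (C i).Nonempty ∧ IsClosed (C i) ∧ Convex ℝ (C i))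
    (Z : ι → Set X) (β : ι → ℝ) (PZ : ι → X → X)
    (hI₀ : ∀ i ∈ I₀, (Z i).Nonempty ∧ IsClosed (Z i) ∧ Convex ℝ (Z i) ∧
      0 < β i ∧ C i = {x : X | Metric.infDist x (Z i) ≤ β i} ∧
      ∀ x : X, PZ i x ∈ Z i ∧ dist x (PZ i x) = Metric.infDist x (Z i))
    (lam : ι → ℝ) (PC : ι → X → X)
    (hI₁ : ∀ i ∉ I₀, lam i ∈ Set.Ioo (0 : ℝ) 2 ∧
      ∀ x : X, PC i x ∈ C i ∧ dist x (PC i x) = Metric.infDist x (C i))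
    (T : ι → X → X)
    (hT₀ : ∀ i ∈ I₀, ∀ x : X,
      (2 * β i ≤ Metric.infDist x (Z i) → T i x = PZ i x) ∧
      (Metric.infDist x (Z i) ≤ β i → T i x = x) ∧
      (β i < Metric.infDist x (Z i) → Metric.infDist x (Z i) < 2 * β i →
        T i x = x + (1 - Metric.infDist x (Z i) / β i) • (x - PZ i x)))
    (hT₁ : ∀ i ∉ I₀, ∀ x : X, T i x = (1 - lam i) • x + lam i • PC i x)
    (hfeas : ((⋂ i ∈ I₀ᶜ, C i) ∩ ⋂ i ∈ I₀, interior (C i)).Nonempty)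
    (sel : ℕ → ι) (hsel : ∀ i, {k : ℕ | sel k = i}.Infinite)
    (hI₁small : (I₀ᶜ : Set ι).Subsingleton)
    (x : ℕ → X) (hx : ∀ k : ℕ, x (k + 1) = T (sel k) (x k)) :
    ∃ xbar ∈ ⋂ i, C i, Filter.Tendsto x Filter.atTop (nhds xbar) := by
  obtain ⟨z, hz₁, hz₀⟩ := hfeas
  simp only [Set.mem_iInter, Set.mem_compl_iff] at hz₁ hz₀
  have hz : ∀ i, z ∈ C i := fun i => by_cases (fun hi => interior_subset (hz₀ i hi)) (hz₁ i)
  obtain ⟨r, hr, hball⟩ := nhds_basis_closedBall.mem_iff.1 <|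
    (biInter_mem I₀.toFinite).2 fun i hi => mem_interior_iff_mem_nhds.1 (hz₀ i hi)
  have step₀ : ∀ k, sel k ∈ I₀ → x (k + 1) ∈ C (sel k) ∧
      ∀ c ∈ C (sel k), dist (x (k + 1)) c ≤ dist (x k) c := by
    intro k hk
    obtain ⟨-, -, hZ, hβ, hCZ, hP⟩ := hI₀ _ hk
    have h : IsIntrepidStep (Z (sel k)) (β (sel k)) (PZ (sel k) (x k)) (x k) (x (k + 1)) :=
      hx k ▸ hT₀ _ hk (x k)
    rw [hCZ]
    exact ⟨h.infDist_le hβ (hP _).1 (hP _).2, fun c hc => h.dist_le hZ hβ (hP _).1 (hP _).2 hc⟩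
  have step₁ : ∀ k, sel k ∉ I₀ → x (k + 1) = lineMap (x k) (PC (sel k) (x k)) (lam (sel k)) :=
    fun k hk => by rw [hx, hT₁ _ hk, lineMap_apply_module]
  have hstep : ∀ k, sel k ∈ I₀ → ∀ c ∈ closedBall z r, dist (x (k + 1)) c ≤ dist (x k) c :=
    fun k hk c hc => (step₀ k hk).2 c (Set.mem_iInter₂.1 (hball hc) _ hk)
  have hsum : Summable fun k => dist (x k) (x (k + 1)) := by
    rcases hI₁small.eq_empty_or_singleton with hempty | ⟨j, hj⟩
    · exact summable_dist_succ_of_fejer hr fun k =>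
        hstep k (Set.eq_univ_iff_forall.1 (Set.compl_empty_iff.1 hempty) (sel k))
    · have hjI : j ∉ I₀ := by simp [← Set.mem_compl_iff, hj]
      refine summable_dist_succ_of_fejer_or_relaxed hr (hC j).2.2 (hz j) (hI₁ j hjI).2
        (hI₁ j hjI).1 fun k => (em (sel k ∈ I₀)).imp (hstep k) fun hk => ?_
      have hkj : sel k ∈ ({j} : Set ι) := hj ▸ Set.mem_compl hk
      rw [step₁ k hk, Set.mem_singleton_iff.1 hkj]
  obtain ⟨xbar, hxbar⟩ := cauchySeq_tendsto_of_complete (cauchySeq_of_summable_dist hsum)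
  refine ⟨xbar, Set.mem_iInter.2 fun i => (hC i).2.1.closure_subset ?_, hxbar⟩
  have hfreq := Nat.frequently_atTop_iff_infinite.2 (hsel i)
  by_cases hi : i ∈ I₀
  · refine mem_closure_of_frequently_dist_le hxbar hsum.tendsto_atTop_zero <|
      hfreq.mono fun k hk => ⟨x (k + 1), hk ▸ (step₀ k (hk ▸ hi)).1, le_rfl⟩
  · obtain ⟨hlam, hP⟩ := hI₁ i hi
    have hδ := hsum.tendsto_atTop_zero.const_mul (lam i)⁻¹
    rw [mul_zero] at hδ
    refine mem_closure_of_frequently_dist_le hxbar hδ <|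
      hfreq.mono fun k hk => ⟨PC i (x k), (hP _).1, le_of_eq ?_⟩
    rw [step₁ k (hk ▸ hi), hk, dist_left_lineMap, Real.norm_eq_abs, abs_of_pos hlam.1,
      inv_mul_cancel_left₀ hlam.1.ne']

/-- main result: strong convergence when `I₁` is small.
CycIP setup.  Suppose `⋂_{i∈I₁} C i ∩ ⋂_{i∈I₀} int (C i) ≠ ∅`, the control is
quasicyclic with quasiperiod `M ≥ 1`, and `I₁ = I₀ᶜ` is empty or a singleton.
Then the generated sequence converges strongly (in norm) to some point of
`C := ⋂ i, C i`. -/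
theorem cycIP_main_strong_convergence
    {X : Type*} [NormedAddCommGroup X] [InnerProductSpace ℝ X] [CompleteSpace X]
    {ι : Type*} [Fintype ι] [Nonempty ι] (I₀ : Set ι)
    (C : ι → Set X)
    (hC : ∀ i, (C i).Nonempty ∧ IsClosed (C i) ∧ Convex ℝ (C i))
    (Z : ι → Set X) (β : ι → ℝ) (PZ : ι → X → X)
    (hI₀ : ∀ i ∈ I₀, (Z i).Nonempty ∧ IsClosed (Z i) ∧ Convex ℝ (Z i) ∧
      0 < β i ∧ C i = {x : X | Metric.infDist x (Z i) ≤ β i} ∧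
      ∀ x : X, PZ i x ∈ Z i ∧ dist x (PZ i x) = Metric.infDist x (Z i))
    (lam : ι → ℝ) (PC : ι → X → X)
    (hI₁ : ∀ i ∉ I₀, lam i ∈ Set.Ioo (0 : ℝ) 2 ∧
      ∀ x : X, PC i x ∈ C i ∧ dist x (PC i x) = Metric.infDist x (C i))
    (T : ι → X → X)
    (hT₀ : ∀ i ∈ I₀, ∀ x : X,
      (2 * β i ≤ Metric.infDist x (Z i) → T i x = PZ i x) ∧
      (Metric.infDist x (Z i) ≤ β i → T i x = x) ∧
      (β i < Metric.infDist x (Z i) → Metric.infDist x (Z i) < 2 * β i →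
        T i x = x + (1 - Metric.infDist x (Z i) / β i) • (x - PZ i x)))
    (hT₁ : ∀ i ∉ I₀, ∀ x : X, T i x = (1 - lam i) • x + lam i • PC i x)
    (hfeas : ((⋂ i ∈ I₀ᶜ, C i) ∩ ⋂ i ∈ I₀, interior (C i)).Nonempty)
    (sel : ℕ → ι) (hsel : ∀ i, {k : ℕ | sel k = i}.Infinite)
    (M : ℕ) (hM : 1 ≤ M)
    (hqc : ∀ k : ℕ, ∀ i : ι, ∃ j < M, sel (k + j) = i)
    (hI₁small : (I₀ᶜ : Set ι).Subsingleton)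
    (x : ℕ → X) (hx : ∀ k : ℕ, x (k + 1) = T (sel k) (x k)) :
    ∃ xbar ∈ ⋂ i, C i, Filter.Tendsto x Filter.atTop (nhds xbar) :=
  cycIP_main_strong_convergence_general I₀ C hC Z β PZ hI₀ lam PC hI₁ T hT₀ hT₁ hfeas sel hsel
    hI₁small x hx
end

section
/- Consider the CycIP setup in a real Hilbert space X, and suppose that ⋂_{i∈I₁} C_i ∩ ⋂_{i∈I₀} int C_i ≠ ∅ and that the control is quasicyclic with some quasiperiod M ≥ 1. Then for the sequence generated by x_{k+1} := T_{i(k)} x_k from any x₀ ∈ X, one has x_k − x_{k+1} → 0 and max_{i∈I} d_{C_i}(x_k) → 0 as k → ∞; in particular, every weak cluster point of (x_k)_{k∈ℕ} lies in C := ⋂_{i∈I} C_i. -/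
/-!
Every operator of the cycle is strongly quasi-nonexpansive with respect to one point `z` of the
feasibility region: `‖T y - z‖² ≤ ‖y - z‖² - κ ‖y - T y‖²`. For a relaxed projection this holds
for any `z ∈ C i`; for an intrepid projector it needs a margin `d_Z(z) ≤ β - ε`, which is exactly
what `z ∈ int (C i)` provides. Hence `‖x k - z‖` decreases and the steps are square-summable, so
`x k - x (k + 1) → 0`. Each operator also satisfies `d_{C i}(y) ≤ c ‖y - T i y‖`, so the distance
to the set just visited tends to zero, and quasicyclicity spreads this to all sets within a window
of length `M`. A weak cluster point then lies in each closed convex `C i` by Hahn–Banach.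
-/

open scoped RealInnerProductSpace

open Filter Metric Topology

def IsMetricProjection {X : Type*} [PseudoMetricSpace X] (Z : Set X) (P : X → X) : Prop :=
  ∀ x, P x ∈ Z ∧ dist x (P x) = infDist x Z

def IsIntrepidProjector {X : Type*} [SeminormedAddCommGroup X] [Module ℝ X] (Z : Set X) (β : ℝ)
    (P T : X → X) : Prop :=
  ∀ x, (2 * β ≤ infDist x Z → T x = P x) ∧ (infDist x Z ≤ β → T x = x) ∧
    (β < infDist x Z → infDist x Z < 2 * β → T x = x + (1 - infDist x Z / β) • (x - P x))

theorem IsMetricProjection.norm_sub_eq {X : Type*} [SeminormedAddCommGroup X] {Z : Set X}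
    {P : X → X} (hP : IsMetricProjection Z P) (x : X) : ‖x - P x‖ = infDist x Z := by
  rw [← dist_eq_norm, (hP x).2]

section InnerProductSpace

variable {X : Type*} [NormedAddCommGroup X] [InnerProductSpace ℝ X] {Z : Set X} {P : X → X}

theorem IsMetricProjection.inner_sub_le_zero (hP : IsMetricProjection Z P) (hZ : Convex ℝ Z)
    (x : X) {y : X} (hy : y ∈ Z) : ⟪x - P x, y - P x⟫ ≤ 0 := by
  refine (norm_eq_iInf_iff_real_inner_le_zero hZ (hP x).1).1 ?_ y hy
  simp only [hP.norm_sub_eq, infDist_eq_iInf, dist_eq_norm]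

theorem IsMetricProjection.sq_sub_mul_le_inner (hP : IsMetricProjection Z P) (hZ : Convex ℝ Z)
    (x z : X) {q : X} (hq : q ∈ Z) :
    ‖x - P x‖ ^ 2 - ‖x - P x‖ * ‖z - q‖ ≤ ⟪x - z, x - P x⟫ := by
  have hsplit : ⟪x - z, x - P x⟫ =
      ⟪x - P x, x - P x⟫ - ⟪x - P x, z - q⟫ - ⟪x - P x, q - P x⟫ := by
    rw [real_inner_comm, ← inner_sub_right, ← inner_sub_right]
    congr 1; abel
  rw [hsplit, real_inner_self_eq_norm_sq]
  linarith [real_inner_le_norm (x - P x) (z - q), hP.inner_sub_le_zero hZ x hq]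

theorem norm_sub_smul_sub_sq_le {x z v : X} {t κ r : ℝ} (ht : 0 ≤ t)
    (hinner : ‖v‖ ^ 2 - ‖v‖ * r ≤ ⟪x - z, v⟫) (hκ : t * ‖v‖ * (1 + κ) ≤ 2 * (‖v‖ - r)) :
    ‖x - t • v - z‖ ^ 2 ≤ ‖x - z‖ ^ 2 - κ * ‖t • v‖ ^ 2 := by
  rw [show x - t • v - z = (x - z) - t • v by abel, norm_sub_sq_real, real_inner_smul_right,
    norm_smul, Real.norm_eq_abs, abs_of_nonneg ht]
  nlinarith [mul_le_mul_of_nonneg_left hκ (mul_nonneg ht (norm_nonneg v)),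
    mul_le_mul_of_nonneg_left hinner ht]

theorem IsMetricProjection.norm_relaxed_sub_sq_le (hP : IsMetricProjection Z P)
    (hZ : Convex ℝ Z) {z : X} (hz : z ∈ Z) {l : ℝ} (hl : 0 < l) (x : X) :
    ‖(1 - l) • x + l • P x - z‖ ^ 2 ≤
      ‖x - z‖ ^ 2 - (2 - l) / l * ‖x - ((1 - l) • x + l • P x)‖ ^ 2 := by
  rw [show (1 - l) • x + l • P x = x - l • (x - P x) by module, sub_sub_cancel]
  refine norm_sub_smul_sub_sq_le hl.le (r := 0) ?_ ?_
  · simpa using hP.sq_sub_mul_le_inner hZ x z hz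
  · rw [show l * ‖x - P x‖ * (1 + (2 - l) / l) = 2 * ‖x - P x‖ by field_simp; ring]
    simp

theorem IsMetricProjection.infDist_le_inv_mul_norm_sub_relaxed (hP : IsMetricProjection Z P)
    {l : ℝ} (hl : 0 < l) (x : X) :
    infDist x Z ≤ l⁻¹ * ‖x - ((1 - l) • x + l • P x)‖ := by
  rw [show x - ((1 - l) • x + l • P x) = l • (x - P x) by module, norm_smul, Real.norm_eq_abs,
    abs_of_pos hl, inv_mul_cancel_left₀ hl.ne', hP.norm_sub_eq]

theorem IsIntrepidProjector.norm_sub_sq_le {β ε : ℝ} {T : X → X}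
    (hT : IsIntrepidProjector Z β P T) (hP : IsMetricProjection Z P) (hZ : Convex ℝ Z)
    (hβ : 0 < β) (hε : 0 ≤ ε) {z : X} (hz : infDist z Z ≤ β - ε) (x : X) :
    ‖T x - z‖ ^ 2 ≤ ‖x - z‖ ^ 2 - ε / β * ‖x - T x‖ ^ 2 := by
  obtain ⟨hfar, hnear, hmid⟩ := hT x
  set d := infDist x Z
  have hv : ‖x - P x‖ = d := hP.norm_sub_eq x
  have hεβ : ε ≤ β := by linarith [infDist_nonneg (x := z) (s := Z)]
  have hinner : ‖x - P x‖ ^ 2 - ‖x - P x‖ * (β - ε) ≤ ⟪x - z, x - P x⟫ := by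
    have := hP.sq_sub_mul_le_inner hZ x z (hP z).1
    rw [(hP.norm_sub_eq z)] at this
    nlinarith [norm_nonneg (x - P x)]
  rcases le_or_gt d β with hdβ | hβd
  · simp [hnear hdβ]
  rcases lt_or_ge d (2 * β) with hd2β | h2βd
  · rw [hmid hβd hd2β, show x + (1 - d / β) • (x - P x) = x - (d / β - 1) • (x - P x) by module,
      sub_sub_cancel]
    refine norm_sub_smul_sub_sq_le (by rw [sub_nonneg, one_le_div hβ]; exact hβd.le) hinner ?_
    rw [hv, show (d / β - 1) * d * (1 + ε / β) = (d - β) * d * (β + ε) / β ^ 2 by field_simp,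
      div_le_iff₀ (by positivity)]
    have hs : 0 ≤ d - β := by linarith
    nlinarith [mul_nonneg (mul_nonneg (by linarith : 0 ≤ 2 * β - d) hs) (by linarith : 0 ≤ β + ε),
      mul_nonneg (mul_nonneg (by linarith : 0 ≤ 2 * β - d) hβ.le) hε]
  · rw [hfar h2βd, show P x = x - (1 : ℝ) • (x - P x) by module, sub_sub_cancel]
    refine norm_sub_smul_sub_sq_le zero_le_one hinner ?_
    rw [hv, one_mul, show d * (1 + ε / β) = d * (β + ε) / β by field_simp, div_le_iff₀ hβ]
    nlinarith [mul_le_mul_of_nonneg_left h2βd (sub_nonneg.2 hεβ)]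


theorem IsMetricProjection.infDist_enlargement_le_sub (hP : IsMetricProjection Z P) {β : ℝ}
    (hβ : 0 < β) {x : X} (hx : β ≤ infDist x Z) :
    infDist x {y | infDist y Z ≤ β} ≤ infDist x Z - β := by
  set d := infDist x Z
  have hv : ‖x - P x‖ = d := hP.norm_sub_eq x
  have hd : 0 < d := hβ.trans_le hx
  -- the point of the segment `[P x, x]` at distance `β` from `P x`
  set w := P x + (β / d) • (x - P x)
  have hw : infDist w Z ≤ β := by
    refine (infDist_le_dist_of_mem (hP x).1).trans_eq ?_
    rw [dist_eq_norm, add_sub_cancel_left, norm_smul, hv, Real.norm_of_nonneg (by positivity),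
      div_mul_cancel₀ _ hd.ne']
  refine (infDist_le_dist_of_mem (show w ∈ {y | infDist y Z ≤ β} from hw)).trans_eq ?_
  rw [dist_eq_norm, show x - w = (1 - β / d) • (x - P x) by module, norm_smul, hv,
    Real.norm_of_nonneg (by rw [sub_nonneg, div_le_one hd]; exact hx)]
  field_simp

theorem IsIntrepidProjector.infDist_enlargement_le {β : ℝ} {T : X → X}
    (hT : IsIntrepidProjector Z β P T) (hP : IsMetricProjection Z P) (hβ : 0 < β) (x : X) :
    infDist x {y | infDist y Z ≤ β} ≤ ‖x - T x‖ := by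
  obtain ⟨hfar, hnear, hmid⟩ := hT x
  set d := infDist x Z
  rcases le_or_gt d β with hdβ | hβd
  · rw [infDist_zero_of_mem (show x ∈ {y | infDist y Z ≤ β} from hdβ)]
    exact norm_nonneg _
  refine (hP.infDist_enlargement_le_sub hβ hβd.le).trans ?_
  rcases lt_or_ge d (2 * β) with hd2β | h2βd
  · rw [hmid hβd hd2β, show x - (x + (1 - d / β) • (x - P x)) = (d / β - 1) • (x - P x) by module,
      norm_smul, hP.norm_sub_eq,
      Real.norm_of_nonneg (by rw [sub_nonneg, one_le_div hβ]; exact hβd.le),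
      show (d / β - 1) * d = (d - β) * (d / β) by field_simp]
    exact le_mul_of_one_le_right (by linarith) ((one_le_div hβ).2 hβd.le)
  · rw [hfar h2βd, hP.norm_sub_eq]
    linarith

theorem IsMetricProjection.add_mul_infDist_le (hP : IsMetricProjection Z P) (hZ : Convex ℝ Z)
    (z : X) (s : ℝ) :
    (1 + s) * infDist z Z ≤ infDist (z + s • (z - P z)) Z := by
  set d := infDist z Z
  have hv : ‖z - P z‖ = d := hP.norm_sub_eq z
  rw [le_infDist ⟨_, (hP z).1⟩]
  intro y hy
  rcases (show 0 ≤ d from infDist_nonneg).eq_or_lt with hd | hd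
  · rw [← hd, mul_zero]; exact dist_nonneg
  -- Cauchy–Schwarz against the direction `z - P z`
  have hinner : (1 + s) * d ^ 2 ≤ ⟪z + s • (z - P z) - y, z - P z⟫ := by
    rw [show z + s • (z - P z) - y = (1 + s) • (z - P z) - (y - P z) by module, inner_sub_left,
      real_inner_smul_left, real_inner_self_eq_norm_sq, hv, real_inner_comm]
    linarith [hP.inner_sub_le_zero hZ z hy]
  have hcs := real_inner_le_norm (z + s • (z - P z) - y) (z - P z)
  rw [hv, ← dist_eq_norm] at hcs
  nlinarith

theorem IsMetricProjection.exists_pos_infDist_le_sub (hP : IsMetricProjection Z P)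
    (hZ : Convex ℝ Z) {β : ℝ} (hβ : 0 < β) {z : X} (hz : z ∈ interior {y | infDist y Z ≤ β}) :
    ∃ ε > 0, infDist z Z ≤ β - ε := by
  obtain ⟨δ, hδ, hball⟩ := isOpen_iff.1 isOpen_interior z hz
  set d := infDist z Z
  rcases (show 0 ≤ d from infDist_nonneg).eq_or_lt with hd | hd
  · exact ⟨β, hβ, by rw [← hd, sub_self]⟩
  refine ⟨δ / 2, by positivity, ?_⟩
  have hw : z + (δ / (2 * d)) • (z - P z) ∈ ball z δ := by
    rw [mem_ball, dist_eq_norm, add_sub_cancel_left, norm_smul, hP.norm_sub_eq,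
      Real.norm_of_nonneg (by positivity)]
    field_simp
    linarith
  have := (hP.add_mul_infDist_le hZ z (δ / (2 * d))).trans
    (show _ ∈ {y | infDist y Z ≤ β} from interior_subset (hball hw))
  rw [add_mul, one_mul, show δ / (2 * d) * d = δ / 2 by field_simp] at this
  linarith

end InnerProductSpace

theorem exists_pos_forall_le_of_finite {ι : Type*} [Finite ι] {f : ι → ℝ} (hf : ∀ i, 0 < f i) :
    ∃ m > 0, ∀ i, m ≤ f i := by
  obtain ⟨M, hM⟩ := Finite.exists_le fun i => (f i)⁻¹
  refine ⟨(max M 1)⁻¹, by positivity, fun i => ?_⟩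
  rw [inv_le_comm₀ (by positivity) (hf i)]
  exact (hM i).trans (le_max_left _ _)

theorem tendsto_sub_succ_of_fejer {X : Type*} [SeminormedAddCommGroup X] {x : ℕ → X} {z : X}
    {κ : ℝ} (hκ : 0 < κ)
    (hx : ∀ k, ‖x (k + 1) - z‖ ^ 2 ≤ ‖x k - z‖ ^ 2 - κ * ‖x k - x (k + 1)‖ ^ 2) :
    Tendsto (fun k => x k - x (k + 1)) atTop (𝓝 0) := by
  set a : ℕ → ℝ := fun k => ‖x k - z‖ ^ 2
  have ha : Antitone a := antitone_nat_of_succ_le fun k => by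
    nlinarith [hx k, mul_nonneg hκ.le (sq_nonneg ‖x k - x (k + 1)‖)]
  have hlim := tendsto_atTop_ciInf ha ⟨0, by rintro _ ⟨k, rfl⟩; positivity⟩
  have hdrop : Tendsto (fun k => (a k - a (k + 1)) / κ) atTop (𝓝 0) := by
    simpa using (hlim.sub (hlim.comp (tendsto_add_atTop_nat 1))).div_const κ
  have hsq : Tendsto (fun k => ‖x k - x (k + 1)‖ ^ 2) atTop (𝓝 0) :=
    squeeze_zero (fun _ => by positivity)
      (fun k => by rw [le_div_iff₀ hκ]; linarith [hx k]) hdrop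
  rw [tendsto_zero_iff_norm_tendsto_zero]
  simpa [Real.sqrt_sq (norm_nonneg _)] using hsq.sqrt

section Iteration

variable {X : Type*} [SeminormedAddCommGroup X] {ι : Type*} [Finite ι] {T : ι → X → X}
  {sel : ℕ → ι} {x : ℕ → X}

theorem tendsto_sub_succ_of_forall_fejer {z : X}
    (hT : ∀ i, ∃ κ > 0, ∀ y, ‖T i y - z‖ ^ 2 ≤ ‖y - z‖ ^ 2 - κ * ‖y - T i y‖ ^ 2)
    (hx : ∀ k, x (k + 1) = T (sel k) (x k)) :
    Tendsto (fun k => x k - x (k + 1)) atTop (𝓝 0) := by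
  choose κ hκ hfejer using hT
  obtain ⟨m, hm, hmκ⟩ := exists_pos_forall_le_of_finite hκ
  refine tendsto_sub_succ_of_fejer (z := z) hm fun k => ?_
  have := hfejer (sel k) (x k)
  rw [← hx] at this
  nlinarith [mul_le_mul_of_nonneg_right (hmκ (sel k)) (sq_nonneg ‖x k - x (k + 1)‖)]

theorem tendsto_infDist_sel {C : ι → Set X}
    (hT : ∀ i, ∃ c, ∀ y, infDist y (C i) ≤ c * ‖y - T i y‖)
    (hx : ∀ k, x (k + 1) = T (sel k) (x k))
    (hstep : Tendsto (fun k => x k - x (k + 1)) atTop (𝓝 0)) :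
    Tendsto (fun k => infDist (x k) (C (sel k))) atTop (𝓝 0) := by
  choose c hc using hT
  obtain ⟨c₀, hc₀⟩ := Finite.exists_le c
  refine squeeze_zero (fun _ => infDist_nonneg) (fun k => ?_)
    (by simpa using (tendsto_zero_iff_norm_tendsto_zero.1 hstep).const_mul c₀)
  calc infDist (x k) (C (sel k)) ≤ c (sel k) * ‖x k - x (k + 1)‖ := hx k ▸ hc (sel k) (x k)
    _ ≤ c₀ * ‖x k - x (k + 1)‖ := by gcongr; exact hc₀ _

end Iteration

theorem tendsto_iSup_infDist_of_quasicyclic {X : Type*} [PseudoMetricSpace X] {ι : Type*}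
    {C : ι → Set X} {sel : ℕ → ι} {M : ℕ} (hqc : ∀ k i, ∃ j < M, sel (k + j) = i) {x : ℕ → X}
    (hgap : Tendsto (fun k => infDist (x k) (C (sel k))) atTop (𝓝 0))
    (hstep : Tendsto (fun k => dist (x k) (x (k + 1))) atTop (𝓝 0)) :
    Tendsto (fun k => ⨆ i, infDist (x k) (C i)) atTop (𝓝 0) := by
  set e := fun k => infDist (x k) (C (sel k))
  set s := fun k => dist (x k) (x (k + 1))
  -- every index is visited within the window `[k, k + M)`
  set S := fun k => ∑ j ∈ Finset.range M, e (k + j) + ∑ j ∈ Finset.range M, s (k + j)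
  have hS : Tendsto S atTop (𝓝 0) := by
    have shift {f : ℕ → ℝ} (hf : Tendsto f atTop (𝓝 0)) :
        Tendsto (fun k => ∑ j ∈ Finset.range M, f (k + j)) atTop (𝓝 0) := by
      simpa using tendsto_finsetSum (Finset.range M)
        fun j _ => hf.comp (tendsto_add_atTop_nat j)
    simpa using (shift hgap).add (shift hstep)
  have hS0 : ∀ k, 0 ≤ S k := fun k =>
    add_nonneg (Finset.sum_nonneg fun _ _ => infDist_nonneg)
      (Finset.sum_nonneg fun _ _ => dist_nonneg)
  refine squeeze_zero (fun k => Real.iSup_nonneg fun i => infDist_nonneg)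
    (fun k => Real.iSup_le (fun i => ?_) (hS0 k)) hS
  obtain ⟨j, hjM, rfl⟩ := hqc k i
  have hdist : dist (x k) (x (k + j)) ≤ ∑ n ∈ Finset.range j, s (k + n) := by
    simpa [s, add_assoc] using dist_le_range_sum_dist (fun n => x (k + n)) j
  calc infDist (x k) (C (sel (k + j))) ≤ e (k + j) + dist (x k) (x (k + j)) :=
        infDist_le_infDist_add_dist
    _ ≤ S k := add_le_add
        (Finset.single_le_sum (f := fun n => e (k + n)) (fun _ _ => infDist_nonneg)
          (Finset.mem_range.2 hjM))
        (hdist.trans (Finset.sum_le_sum_of_subset_of_nonneg (Finset.range_subset_range.2 hjM.le)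
          fun _ _ _ => dist_nonneg))

theorem mem_of_tendsto_inner_of_tendsto_infDist {X : Type*} [NormedAddCommGroup X]
    [InnerProductSpace ℝ X] [CompleteSpace X] {C : Set X} (hne : C.Nonempty) (hcl : IsClosed C)
    (hconv : Convex ℝ C) {y : ℕ → X} {xbar : X}
    (hweak : ∀ u, Tendsto (fun k => ⟪y k, u⟫) atTop (𝓝 ⟪xbar, u⟫))
    (hdist : Tendsto (fun k => infDist (y k) C) atTop (𝓝 0)) : xbar ∈ C := by
  by_contra hx
  obtain ⟨f, u, hfC, hux⟩ := geometric_hahn_banach_closed_point hconv hcl hx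
  set v := (InnerProductSpace.toDual ℝ X).symm f
  have hf : ∀ w, f w = ⟪w, v⟫ := fun w => by
    rw [real_inner_comm, InnerProductSpace.toDual_symm_apply]
  simp only [hf] at hfC hux
  have hbound : ∀ w, ⟪w, v⟫ - u ≤ ‖v‖ * infDist w C := fun w => by
    have := hne.to_subtype
    rw [infDist_eq_iInf, Real.mul_iInf_of_nonneg (norm_nonneg v)]
    refine le_ciInf fun p => ?_
    have := real_inner_le_norm (w - p) v
    rw [inner_sub_left, ← dist_eq_norm] at this
    linarith [hfC p p.2]
  have hlim : ⟪xbar, v⟫ - u ≤ ‖v‖ * 0 :=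
    le_of_tendsto_of_tendsto ((hweak v).sub_const u) (hdist.const_mul _)
      (Eventually.of_forall fun k => hbound (y k))
  linarith

theorem cycIP_asymptotic_regularity_general
    {X : Type*} [NormedAddCommGroup X] [InnerProductSpace ℝ X] [CompleteSpace X]
    {ι : Type*} [Fintype ι] (I₀ : Set ι)
    (C : ι → Set X)
    (hC : ∀ i, (C i).Nonempty ∧ IsClosed (C i) ∧ Convex ℝ (C i))
    (Z : ι → Set X) (β : ι → ℝ) (PZ : ι → X → X)
    (hI₀ : ∀ i ∈ I₀, (Z i).Nonempty ∧ IsClosed (Z i) ∧ Convex ℝ (Z i) ∧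
      0 < β i ∧ C i = {x : X | Metric.infDist x (Z i) ≤ β i} ∧
      ∀ x : X, PZ i x ∈ Z i ∧ dist x (PZ i x) = Metric.infDist x (Z i))
    (lam : ι → ℝ) (PC : ι → X → X)
    (hI₁ : ∀ i ∉ I₀, lam i ∈ Set.Ioo (0 : ℝ) 2 ∧
      ∀ x : X, PC i x ∈ C i ∧ dist x (PC i x) = Metric.infDist x (C i))
    (T : ι → X → X)
    (hT₀ : ∀ i ∈ I₀, ∀ x : X,
      (2 * β i ≤ Metric.infDist x (Z i) → T i x = PZ i x) ∧
      (Metric.infDist x (Z i) ≤ β i → T i x = x) ∧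
      (β i < Metric.infDist x (Z i) → Metric.infDist x (Z i) < 2 * β i →
        T i x = x + (1 - Metric.infDist x (Z i) / β i) • (x - PZ i x)))
    (hT₁ : ∀ i ∉ I₀, ∀ x : X, T i x = (1 - lam i) • x + lam i • PC i x)
    (hfeas : ((⋂ i ∈ I₀ᶜ, C i) ∩ ⋂ i ∈ I₀, interior (C i)).Nonempty)
    (sel : ℕ → ι)
    (M : ℕ)
    (hqc : ∀ k : ℕ, ∀ i : ι, ∃ j < M, sel (k + j) = i)
    (x : ℕ → X) (hx : ∀ k : ℕ, x (k + 1) = T (sel k) (x k)) :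
    Filter.Tendsto (fun k => x k - x (k + 1)) Filter.atTop (nhds 0) ∧
    Filter.Tendsto (fun k => ⨆ i, Metric.infDist (x k) (C i))
      Filter.atTop (nhds 0) ∧
    ∀ xbar : X,
      (∃ φ : ℕ → ℕ, StrictMono φ ∧ ∀ u : X,
        Filter.Tendsto (fun k => ⟪x (φ k), u⟫) Filter.atTop (nhds ⟪xbar, u⟫)) →
      xbar ∈ ⋂ i, C i := by
  obtain ⟨z, hzI₁, hzI₀⟩ := hfeas
  have hfejer : ∀ i, ∃ κ > 0, ∀ y, ‖T i y - z‖ ^ 2 ≤ ‖y - z‖ ^ 2 - κ * ‖y - T i y‖ ^ 2 := by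
    intro i
    by_cases hi : i ∈ I₀
    · obtain ⟨-, -, hZ, hβ, hCi, hP : IsMetricProjection _ _⟩ := hI₀ i hi
      obtain ⟨ε, hε, hzε⟩ :=
        hP.exists_pos_infDist_le_sub hZ hβ (hCi ▸ Set.mem_iInter₂.1 hzI₀ i hi)
      have hTi : IsIntrepidProjector (Z i) (β i) (PZ i) (T i) := hT₀ i hi
      exact ⟨ε / β i, by positivity, hTi.norm_sub_sq_le hP hZ hβ hε.le hzε⟩
    · obtain ⟨⟨hl0, hl2⟩, hP : IsMetricProjection _ _⟩ := hI₁ i hi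
      refine ⟨(2 - lam i) / lam i, div_pos (by linarith) hl0, fun y => ?_⟩
      rw [hT₁ i hi]
      exact hP.norm_relaxed_sub_sq_le (hC i).2.2 (Set.mem_iInter₂.1 hzI₁ i hi) hl0 y
  have hdist : ∀ i, ∃ c, ∀ y, infDist y (C i) ≤ c * ‖y - T i y‖ := by
    intro i
    by_cases hi : i ∈ I₀
    · obtain ⟨-, -, -, hβ, hCi, hP : IsMetricProjection _ _⟩ := hI₀ i hi
      have hTi : IsIntrepidProjector (Z i) (β i) (PZ i) (T i) := hT₀ i hi
      exact ⟨1, fun y => by rw [one_mul, hCi]; exact hTi.infDist_enlargement_le hP hβ y⟩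
    · obtain ⟨⟨hl0, -⟩, hP : IsMetricProjection _ _⟩ := hI₁ i hi
      exact ⟨(lam i)⁻¹, fun y => hT₁ i hi y ▸ hP.infDist_le_inv_mul_norm_sub_relaxed hl0 y⟩
  have hstep := tendsto_sub_succ_of_forall_fejer hfejer hx
  have hgap := tendsto_iSup_infDist_of_quasicyclic hqc (tendsto_infDist_sel hdist hx hstep)
    (by simpa [dist_eq_norm] using tendsto_zero_iff_norm_tendsto_zero.1 hstep)
  refine ⟨hstep, hgap, fun xbar ⟨φ, hφ, hweak⟩ => Set.mem_iInter.2 fun i => ?_⟩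
  refine mem_of_tendsto_inner_of_tendsto_infDist (hC i).1 (hC i).2.1 (hC i).2.2 hweak ?_
  exact squeeze_zero (fun _ => infDist_nonneg)
    (fun k => le_ciSup (f := fun i => infDist (x (φ k)) (C i)) (Finite.bddAbove_range _) i)
    (hgap.comp hφ.tendsto_atTop)

/-- asymptotic regularity and feasibility of the gaps.
CycIP setup.  Suppose `⋂_{i∈I₁} C i ∩ ⋂_{i∈I₀} int (C i) ≠ ∅` and the control
is quasicyclic with quasiperiod `M ≥ 1`.  Then `x k − x (k+1) → 0` and
`max_{i∈I} d_{C i}(x k) → 0`; in particular, every weak cluster point of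
`(x k)` lies in `C := ⋂ i, C i`. -/
theorem cycIP_asymptotic_regularity
    {X : Type*} [NormedAddCommGroup X] [InnerProductSpace ℝ X] [CompleteSpace X]
    {ι : Type*} [Fintype ι] [Nonempty ι] (I₀ : Set ι)
    (C : ι → Set X)
    (hC : ∀ i, (C i).Nonempty ∧ IsClosed (C i) ∧ Convex ℝ (C i))
    (Z : ι → Set X) (β : ι → ℝ) (PZ : ι → X → X)
    (hI₀ : ∀ i ∈ I₀, (Z i).Nonempty ∧ IsClosed (Z i) ∧ Convex ℝ (Z i) ∧
      0 < β i ∧ C i = {x : X | Metric.infDist x (Z i) ≤ β i} ∧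
      ∀ x : X, PZ i x ∈ Z i ∧ dist x (PZ i x) = Metric.infDist x (Z i))
    (lam : ι → ℝ) (PC : ι → X → X)
    (hI₁ : ∀ i ∉ I₀, lam i ∈ Set.Ioo (0 : ℝ) 2 ∧
      ∀ x : X, PC i x ∈ C i ∧ dist x (PC i x) = Metric.infDist x (C i))
    (T : ι → X → X)
    (hT₀ : ∀ i ∈ I₀, ∀ x : X,
      (2 * β i ≤ Metric.infDist x (Z i) → T i x = PZ i x) ∧
      (Metric.infDist x (Z i) ≤ β i → T i x = x) ∧
      (β i < Metric.infDist x (Z i) → Metric.infDist x (Z i) < 2 * β i →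
        T i x = x + (1 - Metric.infDist x (Z i) / β i) • (x - PZ i x)))
    (hT₁ : ∀ i ∉ I₀, ∀ x : X, T i x = (1 - lam i) • x + lam i • PC i x)
    (hfeas : ((⋂ i ∈ I₀ᶜ, C i) ∩ ⋂ i ∈ I₀, interior (C i)).Nonempty)
    (sel : ℕ → ι) (hsel : ∀ i, {k : ℕ | sel k = i}.Infinite)
    (M : ℕ) (hM : 1 ≤ M)
    (hqc : ∀ k : ℕ, ∀ i : ι, ∃ j < M, sel (k + j) = i)
    (x : ℕ → X) (hx : ∀ k : ℕ, x (k + 1) = T (sel k) (x k)) :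
    Filter.Tendsto (fun k => x k - x (k + 1)) Filter.atTop (nhds 0) ∧
    Filter.Tendsto (fun k => ⨆ i, Metric.infDist (x k) (C i))
      Filter.atTop (nhds 0) ∧
    ∀ xbar : X,
      (∃ φ : ℕ → ℕ, StrictMono φ ∧ ∀ u : X,
        Filter.Tendsto (fun k => ⟪x (φ k), u⟫) Filter.atTop (nhds ⟪xbar, u⟫)) →
      xbar ∈ ⋂ i, C i :=
  cycIP_asymptotic_regularity_general I₀ C hC Z β PZ hI₀ lam PC hI₁ T hT₀ hT₁ hfeas sel M hqc x hx
end
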